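/- arXiv:0808.2439 — 4 statements merged into one kernel-verified Lean document; each statement's English description precedes it below -/
import Mathlib

section
/- The quotient module T¹ = Mat(2×3, ℂ[[x1,...,x6]]) / (J(M) + Im g) is zero for M = [[x, y, v],[z, w, u]] over ℂ[[x,y,z,w,v,u]], where J(M) is generated by the six coordinate partial-derivative matrices ∂M/∂x_j and g(A,B) = AM + MB for A ∈ Mat(2×2), B ∈ Mat(3×3) over ℂ[[x,...,u]]. -/
theorem Matrix.span_single_one_eq_top {m n R : Type*} [Fintype m] [Fintype n]
    [DecidableEq m] [DecidableEq n] [Semiring R] :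
    Submodule.span R {N : Matrix m n R | ∃ i j, N = Matrix.single i j 1} = ⊤ := by
  rw [← (Matrix.stdBasis R m n).span_eq]
  congr 1
  ext N
  simp [Matrix.stdBasis_eq_single, eq_comm]

/-- The generic 2×3 determinantal singularity Ω₁ in ℂ⁶ is rigid: for
M = [[x,y,v],[z,w,u]] over R = ℂ[[x,y,z,w,v,u]], the submodule of Mat(2×3,R)
generated by the six partial-derivative matrices ∂M/∂x_j (the elementary
matrices) together with all matrices A·M + M·B is everything, i.e.
T¹ = Mat(2×3,R)/(J(M) + Im g) = 0.  Variables: x,y,v in the first row are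
X 0, X 1, X 4 and z,w,u are X 2, X 3, X 5. -/
theorem stmt_16 :
    let R := MvPowerSeries (Fin 6) ℂ
    let M : Matrix (Fin 2) (Fin 3) R :=
      !![MvPowerSeries.X 0, MvPowerSeries.X 1, MvPowerSeries.X 4;
         MvPowerSeries.X 2, MvPowerSeries.X 3, MvPowerSeries.X 5]
    Submodule.span R
        ({N : Matrix (Fin 2) (Fin 3) R | ∃ i j, N = Matrix.single i j (1 : R)} ∪
         {N : Matrix (Fin 2) (Fin 3) R | ∃ (A : Matrix (Fin 2) (Fin 2) R)
            (B : Matrix (Fin 3) (Fin 3) R), N = A * M + M * B})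
      = ⊤ := by
  intro R M
  -- The entries of the generic matrix are coordinates, so J(M) alone is all of Mat(2×3, R).
  exact top_unique <|
    Matrix.span_single_one_eq_top.ge.trans (Submodule.span_mono Set.subset_union_left)
end

section
/- For k ≥ 2, the ℂ-vector space ℂ[[x,y]]/(f, 𝔪·J(f)) for f = x^{k+1} + y^2 and 𝔪 = (x,y), J(f) = (∂f/∂x, ∂f/∂y), has dimension k + 2. -/
/-!
Since 2 is a unit and k ≥ 1, the ideal `(f, x f_x, y f_x, x f_y, y f_y)` of `x^{k+1} + y^2` is the
monomial ideal `(x^{k+1}, xy, y^2)`. A power series lies in the ideal generated by finitely many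
monomials exactly when its support lies in the upper closure of their exponents, so the quotient
by a monomial ideal is the space of coefficient families on the remaining exponents, here those of
`1, x, …, x^k, y`.
-/

open MvPolynomial

theorem Ideal.span_pow_add_sq_eq {A : Type*} [CommRing A] {x y c u : A} (hu : IsUnit u)
    {k : ℕ} (hk : k ≠ 0) :
    Ideal.span {x ^ (k + 1) + y ^ 2, x * (c * x ^ k), y * (c * x ^ k), x * (u * y), y * (u * y)} =
      Ideal.span {x ^ (k + 1), x * y, y ^ 2} := by
  obtain ⟨j, rfl⟩ : ∃ j, k = j + 1 := ⟨k - 1, by omega⟩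
  apply le_antisymm <;> rw [Ideal.span_le] <;> intro g hg <;>
    simp only [Set.mem_insert_iff, Set.mem_singleton_iff] at hg
  · set J := Ideal.span {x ^ (j + 1 + 1), x * y, y ^ 2}
    have hx : x ^ (j + 1 + 1) ∈ J := Ideal.subset_span (by simp)
    have hxy : x * y ∈ J := Ideal.subset_span (by simp)
    have hy : y ^ 2 ∈ J := Ideal.subset_span (by simp)
    rcases hg with rfl | rfl | rfl | rfl | rfl
    · exact add_mem hx hy
    · exact (show c * x ^ (j + 1 + 1) = x * (c * x ^ (j + 1)) by ring) ▸ J.mul_mem_left c hx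
    · exact (show c * x ^ j * (x * y) = y * (c * x ^ (j + 1)) by ring) ▸ J.mul_mem_left _ hxy
    · exact (show u * (x * y) = x * (u * y) by ring) ▸ J.mul_mem_left u hxy
    · exact (show u * y ^ 2 = y * (u * y) by ring) ▸ J.mul_mem_left u hy
  · set I := Ideal.span {x ^ (j + 1 + 1) + y ^ 2, x * (c * x ^ (j + 1)), y * (c * x ^ (j + 1)),
      x * (u * y), y * (u * y)}
    have cancel : ∀ z, u * z ∈ I → z ∈ I := fun z hz => by
      simpa [← mul_assoc] using I.mul_mem_left ↑hu.unit⁻¹ hz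
    have hy : y ^ 2 ∈ I :=
      cancel _ ((show y * (u * y) = u * y ^ 2 by ring) ▸ Ideal.subset_span (by simp))
    rcases hg with rfl | rfl | rfl
    · exact add_sub_cancel_right (x ^ (j + 1 + 1)) (y ^ 2) ▸
        sub_mem (Ideal.subset_span (by simp)) hy
    · exact cancel _ ((show x * (u * y) = u * (x * y) by ring) ▸ Ideal.subset_span (by simp))
    · exact hy

namespace MvPowerSeries

variable {σ R : Type*}

def upperSetIdeal [CommSemiring R] (S : UpperSet (σ →₀ ℕ)) : Ideal (MvPowerSeries σ R) where
  carrier := {g | ∀ n ∉ S, coeff n g = 0}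
  add_mem' hf hg n hn := by rw [map_add, hf n hn, hg n hn, add_zero]
  zero_mem' n _ := map_zero _
  smul_mem' f g hg n hn := by
    classical
    rw [smul_eq_mul, coeff_mul]
    refine Finset.sum_eq_zero fun p hp => ?_
    rw [hg p.2 fun h => hn (S.upper (Finset.HasAntidiagonal.antidiagonal.snd_le hp) h), mul_zero]

theorem mem_upperSetIdeal [CommSemiring R] {S : UpperSet (σ →₀ ℕ)} {g : MvPowerSeries σ R} :
    g ∈ upperSetIdeal S ↔ ∀ n ∉ S, coeff n g = 0 := Iff.rfl

theorem span_monomial_one_eq_upperSetIdeal [CommSemiring R] (D : Finset (σ →₀ ℕ)) :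
    Ideal.span ((monomial · (1 : R)) '' D) =
      upperSetIdeal (upperClosure (D : Set (σ →₀ ℕ))) := by
  classical
  refine le_antisymm (Ideal.span_le.2 ?_) fun g hg => ?_
  · rintro _ ⟨d, hd, rfl⟩ n hn
    rw [coeff_monomial, if_neg]
    rintro rfl
    exact hn (subset_upperClosure hd)
  induction D using Finset.induction_on generalizing g with
  | empty =>
    simp only [Finset.coe_empty, upperClosure_empty] at hg
    rw [show g = 0 from ext fun n => hg n UpperSet.notMem_top]
    exact zero_mem _
  | insert d D _ ih =>
    -- split `g` as `X^d * q + r`, where `r` keeps the coefficients of `g` at exponents `≱ d`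
    obtain ⟨q, hq⟩ : ∃ q : MvPowerSeries σ R, ∀ m, coeff m q = coeff (m + d) g :=
      ⟨fun m => coeff (m + d) g, fun _ => rfl⟩
    obtain ⟨r, hr⟩ :
        ∃ r : MvPowerSeries σ R, ∀ n, coeff n r = if d ≤ n then 0 else coeff n g :=
      ⟨fun n => if d ≤ n then 0 else coeff n g, fun _ => rfl⟩
    rw [Finset.coe_insert, Set.image_insert_eq, Ideal.mem_span_insert]
    refine ⟨q, r, ih r fun n hn => ?_, ext fun n => ?_⟩
    · rw [hr, ite_eq_left_iff]
      refine fun hdn => hg n fun hmem => ?_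
      obtain ⟨e, he, hen⟩ := mem_upperClosure.1 hmem
      rcases Finset.mem_insert.1 he with rfl | he
      · exact hdn hen
      · exact hn (mem_upperClosure.2 ⟨e, he, hen⟩)
    · rw [map_add, coeff_mul_monomial, hr]
      split_ifs with h
      · rw [hq, tsub_add_cancel_of_le h, mul_one, add_zero]
      · rw [zero_add]

variable [CommRing R]

def coeffOn (T : Set (σ →₀ ℕ)) : MvPowerSeries σ R →ₗ[R] (T → R) :=
  LinearMap.pi fun n => coeff n

theorem coeffOn_surjective (T : Set (σ →₀ ℕ)) :
    Function.Surjective (coeffOn (R := R) T) := by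
  classical
  exact fun v => ⟨fun n => if h : n ∈ T then v ⟨n, h⟩ else 0, funext fun n => dif_pos n.2⟩

theorem ker_coeffOn_compl (S : UpperSet (σ →₀ ℕ)) :
    LinearMap.ker (coeffOn (R := R) (S : Set (σ →₀ ℕ))ᶜ) =
      (upperSetIdeal S).restrictScalars R := by
  ext g
  simp [coeffOn, mem_upperSetIdeal, funext_iff]

theorem finrank_quotient_upperSetIdeal [Nontrivial R] (S : UpperSet (σ →₀ ℕ))
    (hS : (S : Set (σ →₀ ℕ))ᶜ.Finite) :
    Module.finrank R (MvPowerSeries σ R ⧸ upperSetIdeal (R := R) S) =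
      Nat.card ↥(S : Set (σ →₀ ℕ))ᶜ := by
  have := hS.fintype
  rw [← (Submodule.Quotient.restrictScalarsEquiv R (upperSetIdeal (R := R) S)).finrank_eq,
    ← ker_coeffOn_compl, LinearEquiv.finrank_eq (LinearMap.quotKerEquivOfSurjective _
      (coeffOn_surjective _)), Module.finrank_fintype_fun_eq_card, Nat.card_eq_fintype_card]

end MvPowerSeries

section CornerExponents

open Finsupp

noncomputable def cornerExponents (k : ℕ) : Finset (Fin 2 →₀ ℕ) :=
  {single 0 (k + 1), single 0 1 + single 1 1, single 1 2}

theorem compl_upperClosure_cornerExponents (k : ℕ) :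
    (upperClosure (cornerExponents k : Set (Fin 2 →₀ ℕ)) : Set (Fin 2 →₀ ℕ))ᶜ =
      Set.range (Sum.elim (fun a : Fin (k + 1) => single 0 (a : ℕ))
        fun _ : Unit => single 1 1) := by
  ext n
  simp only [cornerExponents, Finset.coe_insert, Finset.coe_singleton, Set.mem_compl_iff,
    SetLike.mem_coe, mem_upperClosure, Set.mem_insert_iff, Set.mem_singleton_iff,
    exists_eq_or_imp, exists_eq_left]
  simp [Finsupp.le_def, Fin.forall_fin_two, Finsupp.ext_iff, Fin.exists_iff]
  omega

theorem card_compl_upperClosure_cornerExponents (k : ℕ) :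
    Nat.card ↥(upperClosure (cornerExponents k : Set (Fin 2 →₀ ℕ)) :
      Set (Fin 2 →₀ ℕ))ᶜ = k + 2 := by
  rw [compl_upperClosure_cornerExponents, Nat.card_range_of_injective]
  · simp
  · refine ((single_injective 0).comp Fin.val_injective).sumElim
      (Function.injective_of_subsingleton _) fun a _ h => ?_
    simpa using DFunLike.congr_fun h 1

end CornerExponents

namespace MvPowerSeries

theorem span_X_pow_X_mul_X_X_sq {R : Type*} [CommSemiring R] (k : ℕ) :
    Ideal.span {X 0 ^ (k + 1), X 0 * X 1, X 1 ^ 2} =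
      upperSetIdeal (R := R) (upperClosure (cornerExponents k : Set (Fin 2 →₀ ℕ))) := by
  rw [← span_monomial_one_eq_upperSetIdeal]
  simp [cornerExponents, Set.image_insert_eq, X_def, monomial_mul_monomial, monomial_pow]

end MvPowerSeries

theorem pderiv_zero_X_pow_add_X_sq {R : Type*} [CommSemiring R] (k : ℕ) :
    pderiv 0 (X 0 ^ (k + 1) + X 1 ^ 2 : MvPolynomial (Fin 2) R) = C ((k : R) + 1) * X 0 ^ k := by
  simp

theorem pderiv_one_X_pow_add_X_sq {R : Type*} [CommSemiring R] (k : ℕ) :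
    pderiv 1 (X 0 ^ (k + 1) + X 1 ^ 2 : MvPolynomial (Fin 2) R) = C 2 * X 1 := by
  rw [map_ofNat C]
  simp

/-- For k ≥ 2 and f = x^{k+1} + y², dim_ℂ ℂ[[x,y]]/(f, x·f_x, y·f_x, x·f_y, y·f_y) = k + 2
(the T¹ with section of the A_k plane curve singularity). -/
theorem stmt_17 (k : ℕ) (hk : 2 ≤ k) :
    let f : MvPolynomial (Fin 2) ℂ := X 0 ^ (k + 1) + X 1 ^ 2
    Module.finrank ℂ (MvPowerSeries (Fin 2) ℂ ⧸
        Ideal.span ({(↑f : MvPowerSeries (Fin 2) ℂ),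
          ↑((X 0 : MvPolynomial (Fin 2) ℂ) * pderiv 0 f), ↑((X 1 : MvPolynomial (Fin 2) ℂ) * pderiv 0 f),
          ↑((X 0 : MvPolynomial (Fin 2) ℂ) * pderiv 1 f), ↑((X 1 : MvPolynomial (Fin 2) ℂ) * pderiv 1 f)} : Set (MvPowerSeries (Fin 2) ℂ)))
      = k + 2 := by
  intro f
  generalize hI : Ideal.span (_ : Set (MvPowerSeries (Fin 2) ℂ)) = I
  simp only [f] at hI
  rw [pderiv_zero_X_pow_add_X_sq, pderiv_one_X_pow_add_X_sq] at hI
  push_cast at hI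
  rw [Ideal.span_pow_add_sq_eq ((isUnit_iff_ne_zero.2 two_ne_zero).map MvPowerSeries.C)
    (by omega), MvPowerSeries.span_X_pow_X_mul_X_X_sq] at hI
  subst hI
  rw [MvPowerSeries.finrank_quotient_upperSetIdeal _
      (compl_upperClosure_cornerExponents k ▸ Set.finite_range _),
    card_compl_upperClosure_cornerExponents]
end

section
/- For f = x^3 + y^4 ∈ ℂ[[x,y]], the ℂ-dimension of ℂ[[x,y]]/(f, x·f_x, y·f_x, x·f_y, y·f_y) equals 8. -/
/-!
Here `x f_x = 3x³`, `y f_x = 3x²y`, `x f_y = 4xy³` and `y f_y = 4y⁴`, while `f = x³ + y⁴` is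
redundant, so the ideal is the monomial ideal `(x³, x²y, xy³, y⁴)`. A power series lies in the
ideal generated by finitely many monomials iff its coefficients vanish at every monomial
divisible by none of them (peel off one generator at a time). Hence the quotient has as basis the
monomials under the staircase, `1, x, y, x², xy, y², xy², y³`.
-/

open MvPolynomial

theorem MvPolynomial.coe_ofNat {σ R : Type*} [CommSemiring R] (n : ℕ) [n.AtLeastTwo] :
    ((ofNat(n) : MvPolynomial σ R) : MvPowerSeries σ R) = ofNat(n) :=
  map_ofNat coeToMvPowerSeries.ringHom n

namespace MvPowerSeries

variable {σ R : Type*}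

theorem coeff_eq_zero_of_mem_ideal_span_monomial_image [CommSemiring R] {S : Set (σ →₀ ℕ)}
    {g : MvPowerSeries σ R} (hg : g ∈ Ideal.span ((monomial · (1 : R)) '' S))
    {e : σ →₀ ℕ} (he : ∀ s ∈ S, ¬ s ≤ e) : coeff e g = 0 := by
  classical
  induction hg using Submodule.span_induction generalizing e with
  | mem x hx =>
    obtain ⟨s, hs, rfl⟩ := hx
    rw [coeff_monomial, if_neg fun h => he s hs h.ge]
  | zero => simp
  | add x y _ _ hx hy => simp [hx he, hy he]
  | smul a x _ hx =>
    rw [smul_eq_mul, coeff_mul]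
    refine Finset.sum_eq_zero fun p hp => ?_
    have hpe : p.2 ≤ e := Finset.HasAntidiagonal.antidiagonal.snd_le hp
    rw [hx fun s hs hsp => he s hs (hsp.trans hpe), mul_zero]

theorem mem_ideal_span_monomial_image_iff [CommRing R] {S : Finset (σ →₀ ℕ)}
    {g : MvPowerSeries σ R} :
    g ∈ Ideal.span ((monomial · (1 : R)) '' S) ↔ ∀ e, (∀ s ∈ S, ¬ s ≤ e) → coeff e g = 0 := by
  classical
  refine ⟨fun hg e he => coeff_eq_zero_of_mem_ideal_span_monomial_image hg he, fun hg => ?_⟩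
  induction S using Finset.induction_on generalizing g with
  | empty =>
    simp only [Finset.coe_empty, Set.image_empty, Ideal.span_empty, Ideal.mem_bot]
    exact ext fun e => by simpa using hg e
  | insert s S _ ih =>
    -- `q * monomial s 1` carries exactly the coefficients of `g` at the exponents `≥ s`.
    let q : MvPowerSeries σ R := fun e => coeff (e + s) g
    have hrest : g - q * monomial s 1 ∈ Ideal.span ((monomial · (1 : R)) '' S) := by
      refine ih fun e he => ?_
      rw [map_sub, coeff_mul_monomial]
      split_ifs with hse
      · rw [show coeff (e - s) q = coeff (e - s + s) g from rfl, tsub_add_cancel_of_le hse,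
          mul_one, sub_self]
      · simp [hg e (by simpa [hse] using he)]
    have hmono : monomial s (1 : R) ∈ Ideal.span ((monomial · (1 : R)) '' ↑(insert s S)) :=
      Ideal.subset_span ⟨s, by simp, rfl⟩
    rw [← sub_add_cancel g (q * monomial s 1)]
    exact Ideal.add_mem _ (Ideal.span_mono (by gcongr; simp) hrest) (Ideal.mul_mem_left _ _ hmono)

theorem finrank_quotient_ideal_span_monomial_image {k : Type*} [Field k] (S T : Finset (σ →₀ ℕ))
    (hT : ∀ e, e ∈ T ↔ ∀ s ∈ S, ¬ s ≤ e) :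
    Module.finrank k (MvPowerSeries σ k ⧸ Ideal.span ((monomial · (1 : k)) '' S)) = T.card := by
  classical
  let φ : MvPowerSeries σ k →ₗ[k] (T → k) := LinearMap.pi fun t => coeff t.1
  have hker : LinearMap.ker φ = (Ideal.span ((monomial · (1 : k)) '' S)).restrictScalars k := by
    ext g
    simp [φ, mem_ideal_span_monomial_image_iff, funext_iff, hT]
  have hφ : Function.Surjective φ := fun c => by
    refine ⟨∑ t, c t • monomial t.1 1, funext fun t => ?_⟩
    simp [φ, coeff_monomial]
  rw [← (Submodule.Quotient.restrictScalarsEquiv k _).finrank_eq, ← hker,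
    (φ.quotKerEquivOfSurjective hφ).finrank_eq, Module.finrank_fintype_fun_eq_card,
    Fintype.card_coe]

end MvPowerSeries

noncomputable section

def bideg (a b : ℕ) : Fin 2 →₀ ℕ := Finsupp.single 0 a + Finsupp.single 1 b

theorem bideg_apply_zero (a b : ℕ) : bideg a b 0 = a := by simp [bideg]

theorem bideg_apply_one (a b : ℕ) : bideg a b 1 = b := by simp [bideg]

theorem eq_bideg_iff {e : Fin 2 →₀ ℕ} {a b : ℕ} : e = bideg a b ↔ e 0 = a ∧ e 1 = b := by
  simp [Finsupp.ext_iff, Fin.forall_fin_two, bideg_apply_zero, bideg_apply_one]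

theorem bideg_le_iff {e : Fin 2 →₀ ℕ} {a b : ℕ} : bideg a b ≤ e ↔ a ≤ e 0 ∧ b ≤ e 1 := by
  simp [Finsupp.le_def, Fin.forall_fin_two, bideg_apply_zero, bideg_apply_one]

theorem MvPowerSeries.monomial_bideg {R : Type*} [CommSemiring R] (a b : ℕ) :
    monomial (bideg a b) (1 : R) = X 0 ^ a * X 1 ^ b := by
  rw [X_pow_eq, X_pow_eq, monomial_mul_monomial, mul_one, bideg]

/-- The ideal `(f, 𝔪 J(f))` of `k[[x, y]]`, with `x = X 0` and `y = X 1`. -/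
def tjurinaIdeal {k : Type*} [CommRing k] (f : MvPolynomial (Fin 2) k) :
    Ideal (MvPowerSeries (Fin 2) k) :=
  Ideal.span {(f : MvPowerSeries (Fin 2) k),
    ↑((X 0 : MvPolynomial (Fin 2) k) * pderiv 0 f), ↑((X 1 : MvPolynomial (Fin 2) k) * pderiv 0 f),
    ↑((X 0 : MvPolynomial (Fin 2) k) * pderiv 1 f), ↑((X 1 : MvPolynomial (Fin 2) k) * pderiv 1 f)}

def e6MonomialExponents : Finset (Fin 2 →₀ ℕ) := {bideg 3 0, bideg 2 1, bideg 1 3, bideg 0 4}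

def e6StandardExponents : Finset (Fin 2 →₀ ℕ) :=
  {bideg 0 0, bideg 1 0, bideg 0 1, bideg 2 0, bideg 1 1, bideg 0 2, bideg 1 2, bideg 0 3}

theorem mem_e6StandardExponents_iff (e : Fin 2 →₀ ℕ) :
    e ∈ e6StandardExponents ↔ ∀ s ∈ e6MonomialExponents, ¬ s ≤ e := by
  simp only [e6MonomialExponents, Finset.mem_insert, Finset.mem_singleton, forall_eq_or_imp,
    forall_eq]
  simp only [e6StandardExponents, Finset.mem_insert, Finset.mem_singleton, eq_bideg_iff,
    bideg_le_iff]
  omega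

theorem card_e6StandardExponents : e6StandardExponents.card = 8 := by
  simp [e6StandardExponents, eq_bideg_iff, bideg_apply_zero, bideg_apply_one]

theorem tjurinaIdeal_e6 {k : Type*} [Field k] [CharZero k] :
    tjurinaIdeal (X 0 ^ 3 + X 1 ^ 4 : MvPolynomial (Fin 2) k) =
      Ideal.span ((MvPowerSeries.monomial · (1 : k)) '' e6MonomialExponents) := by
  have isUnit_ofNat (n : ℕ) [n.AtLeastTwo] : IsUnit (ofNat(n) : MvPowerSeries (Fin 2) k) :=
    MvPowerSeries.isUnit_iff_constantCoeff.mpr <| by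
      rw [map_ofNat]; exact isUnit_iff_ne_zero.mpr (OfNat.ofNat_ne_zero n)
  simp only [tjurinaIdeal, e6MonomialExponents, Finset.coe_insert, Finset.coe_singleton,
    Set.image_insert_eq, Set.image_singleton, MvPowerSeries.monomial_bideg]
  simp only [coe_add, coe_pow, coe_X, map_add, Derivation.leibniz_pow, Nat.add_one_sub_one,
    pderiv_X, Pi.single_eq_same, smul_eq_mul, mul_one, nsmul_eq_mul, Nat.cast_ofNat, ne_eq,
    one_ne_zero, not_false_eq_true, Pi.single_eq_of_ne, mul_zero, add_zero, coe_mul,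
    coe_ofNat, zero_ne_one, zero_add, pow_zero, pow_one, one_mul]
  ring_nf
  apply le_antisymm <;> rw [Ideal.span_le] <;>
    simp only [Set.insert_subset_iff, Set.singleton_subset_iff, SetLike.mem_coe]
  · refine ⟨add_mem (Ideal.subset_span (by simp)) (Ideal.subset_span (by simp)), ?_, ?_, ?_, ?_⟩ <;>
      exact Ideal.mul_mem_right _ _ (Ideal.subset_span (by simp))
  · refine ⟨?_, ?_, ?_, ?_⟩
    · exact (Ideal.mul_unit_mem_iff_mem _ (isUnit_ofNat 3)).mp (Ideal.subset_span (by simp))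
    · exact (Ideal.mul_unit_mem_iff_mem _ (isUnit_ofNat 3)).mp (Ideal.subset_span (by simp))
    · exact (Ideal.mul_unit_mem_iff_mem _ (isUnit_ofNat 4)).mp (Ideal.subset_span (by simp))
    · exact (Ideal.mul_unit_mem_iff_mem _ (isUnit_ofNat 4)).mp (Ideal.subset_span (by simp))

end

/-- For f = x³ + y⁴, dim_ℂ ℂ[[x,y]]/(f, x·f_x, y·f_x, x·f_y, y·f_y) = 8
(the Tjurina number of E₆⁺). -/
theorem stmt_18 :
    let f : MvPolynomial (Fin 2) ℂ := X 0 ^ 3 + X 1 ^ 4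
    Module.finrank ℂ (MvPowerSeries (Fin 2) ℂ ⧸
        Ideal.span ({(↑f : MvPowerSeries (Fin 2) ℂ),
          ↑((X 0 : MvPolynomial (Fin 2) ℂ) * pderiv 0 f), ↑((X 1 : MvPolynomial (Fin 2) ℂ) * pderiv 0 f),
          ↑((X 0 : MvPolynomial (Fin 2) ℂ) * pderiv 1 f), ↑((X 1 : MvPolynomial (Fin 2) ℂ) * pderiv 1 f)} : Set (MvPowerSeries (Fin 2) ℂ)))
      = 8 := by
  show Module.finrank ℂ (MvPowerSeries (Fin 2) ℂ ⧸
    tjurinaIdeal (X 0 ^ 3 + X 1 ^ 4 : MvPolynomial (Fin 2) ℂ)) = 8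
  rw [tjurinaIdeal_e6, MvPowerSeries.finrank_quotient_ideal_span_monomial_image _ _
    mem_e6StandardExponents_iff, card_e6StandardExponents]
end

section
/- Let M = [[w, y, x],[z, w+α(u,v), y+β(u,v)]] with α, β ∈ (u,v)^2 ⊂ ℂ[[u,v]]. Then the scheme defined by the 2×2 minors of M in ℂ[[x,y,z,w,u,v]] has singular locus defined by the ideal (x, y, z, w, α, β); in particular M defines an isolated singularity if and only if (α, β) defines a fat point in the (u,v)-plane, i.e. ℂ[[u,v]]/(α,β) is finite-dimensional over ℂ. -/
/-!
At a point of the variety, the 2×2 minors of the Jacobian taken in the `x, y, z, w` columns,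
together with the equations `y (y + β) = x (w + α)` and `w (w + α) = y z`, successively force
`x² = z² = y² = (w + α)² = w² = β² = 0`. Conversely, at a point with `x = y = z = w = 0` and
`α = β = 0` the whole Jacobian vanishes. So the singular locus is `{0}⁴ × V(α, β)`, and by the
Nullstellensatz `V(α, β)` is finite exactly when `ℂ[u, v] ⧸ (α, β)` is finite-dimensional.
-/

open MvPolynomial Matrix

theorem Matrix.det_submatrix_eq_zero_of_rank_lt {K m n ι : Type*} [Field K] [Fintype n]
    [Fintype ι] [DecidableEq ι] (M : Matrix m n K) (r : ι → m) (c : ι → n)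
    (h : M.rank < Fintype.card ι) : (M.submatrix r c).det = 0 := by
  by_contra hdet
  have hunit : IsUnit (M.submatrix r c) :=
    (isUnit_iff_isUnit_det _).mpr (isUnit_iff_ne_zero.mpr hdet)
  have hle := M.rank_submatrix_le r c
  rw [rank_of_isUnit _ hunit] at hle
  omega

theorem MvPolynomial.pderiv_rename_eq_zero {R σ τ : Type*} [CommSemiring R] [DecidableEq τ]
    {f : σ → τ} {j : τ} (hj : j ∉ Set.range f) (q : MvPolynomial σ R) :
    pderiv j (rename f q) = 0 := by
  refine pderiv_eq_zero_of_notMem_vars fun hmem => hj ?_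
  obtain ⟨i, -, rfl⟩ := Finset.mem_image.mp (vars_rename f q hmem)
  exact ⟨i, rfl⟩

noncomputable def MvPolynomial.jacobianAt {R σ ι : Type*} [CommSemiring R] [DecidableEq σ]
    (g : ι → MvPolynomial σ R) (p : σ → R) : Matrix ι σ R :=
  of fun i j => eval p (pderiv j (g i))

namespace MvPolynomial

variable {K σ : Type*} [Field K]

theorem aeval_aeval_X (x : σ → K) (i : σ) (f : Polynomial K) :
    aeval x (Polynomial.aeval (X i : MvPolynomial σ K) f) = Polynomial.aeval (x i) f := by
  rw [← Polynomial.aeval_algHom_apply, aeval_X]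

theorem exists_monic_aeval_X_mem_of_finite_quotient (I : Ideal (MvPolynomial σ K))
    [Module.Finite K (MvPolynomial σ K ⧸ I)] (i : σ) :
    ∃ f : Polynomial K, f.Monic ∧ Polynomial.aeval (X i) f ∈ I := by
  obtain ⟨f, hmonic, hf⟩ := IsIntegral.of_finite K (Ideal.Quotient.mk I (X i))
  refine ⟨f, hmonic, Ideal.Quotient.eq_zero_iff_mem.mp ?_⟩
  rwa [← Ideal.Quotient.mkₐ_eq_mk K, ← Polynomial.aeval_algHom_apply, Ideal.Quotient.mkₐ_eq_mk,
    Polynomial.aeval_def]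

theorem finite_zeroLocus_of_finite_quotient [Finite σ] (I : Ideal (MvPolynomial σ K))
    [Module.Finite K (MvPolynomial σ K ⧸ I)] : (zeroLocus K I).Finite := by
  choose f hmonic hf using exists_monic_aeval_X_mem_of_finite_quotient I
  refine (Set.Finite.pi' fun i => (f i).finite_setOfPred_isRoot (hmonic i).ne_zero).subset ?_
  intro x hx i
  simpa [aeval_aeval_X] using hx _ (hf i)

theorem isIntegral_mk_X_of_finite_zeroLocus [IsAlgClosed K] [Finite σ]
    {I : Ideal (MvPolynomial σ K)} (hI : (zeroLocus K I).Finite) (i : σ) :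
    IsIntegral K (Ideal.Quotient.mk I (X i)) := by
  -- `∏ (X i - x i)` over the finitely many zeros `x` vanishes on `zeroLocus K I`,
  -- so by the Nullstellensatz a power of it lies in `I`.
  set f : Polynomial K := ∏ x ∈ hI.toFinset, (Polynomial.X - Polynomial.C (x i))
  have hmonic : f.Monic := Polynomial.monic_prod_of_monic _ _ fun _ _ => Polynomial.monic_X_sub_C _
  have hvanish : Polynomial.aeval (X i) f ∈ vanishingIdeal K (zeroLocus K I) := by
    intro x hx
    rw [aeval_aeval_X, Polynomial.aeval_def, Polynomial.eval₂_finsetProd]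
    exact Finset.prod_eq_zero (hI.mem_toFinset.mpr hx) (by simp)
  rw [vanishingIdeal_zeroLocus_eq_radical] at hvanish
  obtain ⟨n, hn⟩ := Ideal.mem_radical_iff.mp hvanish
  refine ⟨f ^ n, hmonic.pow n, ?_⟩
  rw [← Polynomial.aeval_def, ← Ideal.Quotient.mkₐ_eq_mk K, Polynomial.aeval_algHom_apply,
    Ideal.Quotient.mkₐ_eq_mk, map_pow, Ideal.Quotient.eq_zero_iff_mem.mpr hn]

theorem finite_quotient_of_finite_zeroLocus [IsAlgClosed K] [Finite σ]
    {I : Ideal (MvPolynomial σ K)} (hI : (zeroLocus K I).Finite) :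
    Module.Finite K (MvPolynomial σ K ⧸ I) := by
  have : Algebra.IsIntegral K (MvPolynomial σ K ⧸ I) := by
    rw [← integralClosure_eq_top_iff, eq_top_iff]
    calc ⊤ = (Algebra.adjoin K (Set.range X)).map (Ideal.Quotient.mkₐ K I) := by
          rw [adjoin_range_X, Algebra.map_top,
            (AlgHom.range_eq_top _).mpr (Ideal.Quotient.mkₐ_surjective K I)]
      _ = Algebra.adjoin K (Set.range fun i => Ideal.Quotient.mk I (X i)) := by
          rw [AlgHom.map_adjoin, ← Set.range_comp]; rfl
      _ ≤ _ := Algebra.adjoin_le <| Set.range_subset_iff.mpr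
          (isIntegral_mk_X_of_finite_zeroLocus hI)
  exact Algebra.IsIntegral.finite

theorem finite_zeroLocus_iff_finite_quotient [IsAlgClosed K] [Finite σ]
    (I : Ideal (MvPolynomial σ K)) :
    (zeroLocus K I).Finite ↔ Module.Finite K (MvPolynomial σ K ⧸ I) :=
  ⟨finite_quotient_of_finite_zeroLocus, fun _ => finite_zeroLocus_of_finite_quotient I⟩

end MvPolynomial

section J41

variable {K : Type*} [Field K]

/-- The 2×2 minors of `[[w, y, x], [z, w + A, y + B]]`, where `x, y, z, w = X 0, X 1, X 2, X 3`. -/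
noncomputable def j41Minors (A B : MvPolynomial (Fin 6) K) : Fin 3 → MvPolynomial (Fin 6) K :=
  ![X 1 * (X 1 + B) - X 0 * (X 3 + A), X 3 * (X 1 + B) - X 0 * X 2, X 3 * (X 3 + A) - X 1 * X 2]

def j41Jacobian (x y z w a b : K) : Matrix (Fin 3) (Fin 4) K :=
  !![-(w + a), 2 * y + b, 0, -x; -z, w, -x, y + b; 0, -z, -y, 2 * w + a]

theorem eq_zero_of_rank_j41Jacobian_lt_two {x y z w a b : K}
    (h₀ : y * (y + b) - x * (w + a) = 0) (h₂ : w * (w + a) - y * z = 0)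
    (hrank : (j41Jacobian x y z w a b).rank < 2) :
    x = 0 ∧ y = 0 ∧ z = 0 ∧ w = 0 ∧ a = 0 ∧ b = 0 := by
  set N := j41Jacobian x y z w a b
  have minor (i j : Fin 3) (k l : Fin 4) : N i k * N j l - N i l * N j k = 0 := by
    have := N.det_submatrix_eq_zero_of_rank_lt ![i, j] ![k, l] hrank
    rwa [det_fin_two] at this
  have m01zw : 0 * (y + b) - -x * -x = 0 := minor 0 1 2 3
  have m01yw : (2 * y + b) * (y + b) - -x * w = 0 := minor 0 1 1 3
  have m02yz : (2 * y + b) * -y - 0 * -z = 0 := minor 0 2 1 2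
  have m02xw : -(w + a) * (2 * w + a) - -x * 0 = 0 := minor 0 2 0 3
  have m12xy : -z * -z - w * 0 = 0 := minor 1 2 0 1
  have m12yw : w * (2 * w + a) - (y + b) * -z = 0 := minor 1 2 1 3
  have hx : x = 0 := pow_eq_zero_iff two_ne_zero |>.mp (by linear_combination -m01zw)
  have hz : z = 0 := pow_eq_zero_iff two_ne_zero |>.mp (by linear_combination m12xy)
  have hy : y = 0 := pow_eq_zero_iff two_ne_zero |>.mp
    (by linear_combination -m02yz - h₀ - (w + a) * hx)
  have hwa : w + a = 0 := pow_eq_zero_iff two_ne_zero |>.mp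
    (by linear_combination -m02xw - h₂ - z * hy)
  have hw : w = 0 := pow_eq_zero_iff two_ne_zero |>.mp
    (by linear_combination m12yw - w * hwa - (y + b) * hz)
  have hb : b = 0 := pow_eq_zero_iff two_ne_zero |>.mp
    (by linear_combination m01yw - (2 * y + 3 * b) * hy - w * hx)
  exact ⟨hx, hy, hz, hw, by linear_combination hwa - hw, hb⟩

variable {A B : MvPolynomial (Fin 6) K}

theorem submatrix_jacobianAt_j41Minors (hA : ∀ j : Fin 6, (j : ℕ) < 4 → pderiv j A = 0)
    (hB : ∀ j : Fin 6, (j : ℕ) < 4 → pderiv j B = 0) (p : Fin 6 → K) :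
    (jacobianAt (j41Minors A B) p).submatrix id (Fin.castLE (by norm_num)) =
      j41Jacobian (p 0) (p 1) (p 2) (p 3) (eval p A) (eval p B) := by
  ext i j
  fin_cases i <;> fin_cases j <;>
    simp [jacobianAt, j41Minors, j41Jacobian, hA, hB] <;> ring

theorem jacobianAt_j41Minors_eq_zero {p : Fin 6 → K} (h₀ : p 0 = 0) (h₁ : p 1 = 0)
    (h₂ : p 2 = 0) (h₃ : p 3 = 0) (hA : eval p A = 0) (hB : eval p B = 0) : jacobianAt (j41Minors A B) p = 0 := by
  ext i j
  fin_cases i <;> fin_cases j <;>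
    simp [jacobianAt, j41Minors, h₀, h₁, h₂, h₃, hA, hB]

theorem j41Minors_singular_iff (hA : ∀ j : Fin 6, (j : ℕ) < 4 → pderiv j A = 0)
    (hB : ∀ j : Fin 6, (j : ℕ) < 4 → pderiv j B = 0) (p : Fin 6 → K) :
    ((∀ i, eval p (j41Minors A B i) = 0) ∧ (jacobianAt (j41Minors A B) p).rank < 2) ↔
      p 0 = 0 ∧ p 1 = 0 ∧ p 2 = 0 ∧ p 3 = 0 ∧ eval p A = 0 ∧ eval p B = 0 := by
  constructor
  · rintro ⟨hzero, hrank⟩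
    have hrank' : (j41Jacobian (p 0) (p 1) (p 2) (p 3) (eval p A) (eval p B)).rank < 2 := by
      rw [← submatrix_jacobianAt_j41Minors hA hB p]
      exact (rank_submatrix_le _ _ _).trans_lt hrank
    have h₀ : p 1 * (p 1 + eval p B) - p 0 * (p 3 + eval p A) = 0 := by
      simpa [j41Minors] using hzero 0
    have h₂ : p 3 * (p 3 + eval p A) - p 1 * p 2 = 0 := by
      simpa [j41Minors] using hzero 2
    exact eq_zero_of_rank_j41Jacobian_lt_two h₀ h₂ hrank'
  · rintro ⟨h₀, h₁, h₂, h₃, hA₀, hB₀⟩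
    refine ⟨fun i => by fin_cases i <;> simp [j41Minors, h₀, h₁, h₃], ?_⟩
    rw [jacobianAt_j41Minors_eq_zero h₀ h₁ h₂ h₃ hA₀ hB₀, rank_zero]
    norm_num

end J41

theorem finite_setOf_first_four_eq_zero_iff {K : Type*} [Zero K] (Z : Set (Fin 2 → K)) :
    {p : Fin 6 → K | p 0 = 0 ∧ p 1 = 0 ∧ p 2 = 0 ∧ p 3 = 0 ∧ ![p 4, p 5] ∈ Z}.Finite ↔
      Z.Finite := by
  let embed : (Fin 2 → K) → Fin 6 → K := fun q => ![0, 0, 0, 0, q 0, q 1]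
  have hembed : Function.Injective embed := fun q q' h => by
    ext i; fin_cases i
    exacts [congrFun h 4, congrFun h 5]
  have himage : {p : Fin 6 → K | p 0 = 0 ∧ p 1 = 0 ∧ p 2 = 0 ∧ p 3 = 0 ∧ ![p 4, p 5] ∈ Z} =
      embed '' Z := by
    ext p
    constructor
    · rintro ⟨h₀, h₁, h₂, h₃, hZ⟩
      refine ⟨_, hZ, ?_⟩
      ext i; fin_cases i <;> simp [embed, h₀, h₁, h₂, h₃]
    · rintro ⟨q, hq, rfl⟩
      refine ⟨rfl, rfl, rfl, rfl, ?_⟩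
      convert hq
      ext i; fin_cases i <;> rfl
  rw [himage, Set.finite_image_iff hembed.injOn]

theorem stmt_19_general (α β : MvPolynomial (Fin 2) ℂ) :
    let A : MvPolynomial (Fin 6) ℂ := rename ![4, 5] α
    let B : MvPolynomial (Fin 6) ℂ := rename ![4, 5] β
    let g : Fin 3 → MvPolynomial (Fin 6) ℂ :=
      ![X 1 * (X 1 + B) - X 0 * (X 3 + A),
        X 3 * (X 1 + B) - X 0 * X 2,
        X 3 * (X 3 + A) - X 1 * X 2]
    let singPt : (Fin 6 → ℂ) → Prop := fun p =>
      (∀ i : Fin 3, eval p (g i) = 0) ∧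
        (Matrix.of fun (i : Fin 3) (j : Fin 6) => eval p (pderiv j (g i))).rank < 2
    (∀ p : Fin 6 → ℂ,
      singPt p ↔ (p 0 = 0 ∧ p 1 = 0 ∧ p 2 = 0 ∧ p 3 = 0 ∧
        eval ![p 4, p 5] α = 0 ∧ eval ![p 4, p 5] β = 0)) ∧
    ({p : Fin 6 → ℂ | singPt p}.Finite ↔
      FiniteDimensional ℂ (MvPolynomial (Fin 2) ℂ ⧸
        Ideal.span ({α, β} : Set (MvPolynomial (Fin 2) ℂ)))) := by
  intro A B g singPt
  have hpderiv (q : MvPolynomial (Fin 2) ℂ) (j : Fin 6) (hj : (j : ℕ) < 4) :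
      pderiv j (rename ![4, 5] q) = 0 :=
    pderiv_rename_eq_zero (by rintro ⟨i, rfl⟩; fin_cases i <;> simp at hj) q
  have heval (p : Fin 6 → ℂ) (q : MvPolynomial (Fin 2) ℂ) :
      eval p (rename ![4, 5] q) = eval ![p 4, p 5] q := by
    have hcomp : p ∘ ![4, 5] = ![p 4, p 5] := by ext i; fin_cases i <;> rfl
    rw [eval_rename, hcomp]
  have hsing (p : Fin 6 → ℂ) : singPt p ↔ (p 0 = 0 ∧ p 1 = 0 ∧ p 2 = 0 ∧ p 3 = 0 ∧
      eval ![p 4, p 5] α = 0 ∧ eval ![p 4, p 5] β = 0) := by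
    rw [← heval, ← heval]
    exact j41Minors_singular_iff (hpderiv α) (hpderiv β) p
  refine ⟨hsing, ?_⟩
  refine Iff.trans ?_ (finite_zeroLocus_iff_finite_quotient _)
  rw [zeroLocus_span, ← finite_setOf_first_four_eq_zero_iff]
  simp [hsing]

/-- Case J^(4,1) in 6 variables: for M = [[w,y,x],[z,w+α(u,v),y+β(u,v)]] with
α, β ∈ (u,v)², the singular locus of the determinantal variety of 2×2 minors of M
in ℂ⁶ is exactly V(x,y,z,w,α,β); in particular M defines an isolated singularity
iff (α,β) defines a fat point in the (u,v)-plane.  Variables in ℂ[x,y,z,w,u,v]: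
x = X 0, y = X 1, z = X 2, w = X 3, u = X 4, v = X 5. -/
theorem stmt_19 (α β : MvPolynomial (Fin 2) ℂ)
    (hα : α ∈ (Ideal.span ({X 0, X 1} : Set (MvPolynomial (Fin 2) ℂ))) ^ 2)
    (hβ : β ∈ (Ideal.span ({X 0, X 1} : Set (MvPolynomial (Fin 2) ℂ))) ^ 2) :
    let A : MvPolynomial (Fin 6) ℂ := rename ![4, 5] α
    let B : MvPolynomial (Fin 6) ℂ := rename ![4, 5] β
    let g : Fin 3 → MvPolynomial (Fin 6) ℂ :=
      ![X 1 * (X 1 + B) - X 0 * (X 3 + A),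
        X 3 * (X 1 + B) - X 0 * X 2,
        X 3 * (X 3 + A) - X 1 * X 2]
    let singPt : (Fin 6 → ℂ) → Prop := fun p =>
      (∀ i : Fin 3, eval p (g i) = 0) ∧
        (Matrix.of fun (i : Fin 3) (j : Fin 6) => eval p (pderiv j (g i))).rank < 2
    (∀ p : Fin 6 → ℂ,
      singPt p ↔ (p 0 = 0 ∧ p 1 = 0 ∧ p 2 = 0 ∧ p 3 = 0 ∧
        eval ![p 4, p 5] α = 0 ∧ eval ![p 4, p 5] β = 0)) ∧
    ({p : Fin 6 → ℂ | singPt p}.Finite ↔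
      FiniteDimensional ℂ (MvPolynomial (Fin 2) ℂ ⧸
        Ideal.span ({α, β} : Set (MvPolynomial (Fin 2) ℂ)))) :=
  stmt_19_general α β
end
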